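/- Additive property of accuracies: if θ₁ = h(θ₀, y₁, α₁) with y₁ ~ N(x, α₁⁻¹) and θ₂ = h(θ₁, y₂, α₂) with y₂ ~ N(x, α₂⁻¹) independent, then the marginal distribution of the posterior mean μ₂ (the first component of θ₂) is Gaussian: μ₂ ~ N( (μ₀ρ₀ + x(α₁+α₂)) / (ρ₀+α₁+α₂), (α₁+α₂)/(ρ₀+α₁+α₂)² ), i.e. the same distribution obtained from a single Bayesian update with accuracy α₁+α₂ and observation y ~ N(x, (α₁+α₂)⁻¹). -/

import Mathlib

open MeasureTheory ProbabilityTheory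

/-- The Gaussian Bayesian update function. -/
noncomputable def bayesUpdate (θ : ℝ × ℝ) (y α : ℝ) : ℝ × ℝ :=
  ((θ.1 * θ.2 + y * α) / (θ.2 + α), θ.2 + α)

/-!
Two successive updates with accuracies `α₁`, `α₂` amount to a single update with accuracy
`α₁ + α₂` fed with the precision-weighted mean `(α₁ y₁ + α₂ y₂) / (α₁ + α₂)`. Since
`αᵢ Yᵢ ~ N(αᵢ x, αᵢ)` are independent, their sum is `N((α₁ + α₂) x, α₁ + α₂)`, so that mean is
`N(x, (α₁ + α₂)⁻¹)`; and the posterior mean of one update is an affine function of its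
observation.
-/

lemma bayesUpdate_bayesUpdate (θ : ℝ × ℝ) (y₁ y₂ α₁ α₂ : ℝ) (h₁ : θ.2 + α₁ ≠ 0)
    (h₁₂ : α₁ + α₂ ≠ 0) :
    bayesUpdate (bayesUpdate θ y₁ α₁) y₂ α₂ =
      bayesUpdate θ ((α₁ * y₁ + α₂ * y₂) / (α₁ + α₂)) (α₁ + α₂) := by
  simp only [bayesUpdate, Prod.mk.injEq, add_assoc, and_true]
  field_simp
  ring

namespace ProbabilityTheory.HasLaw

variable {Ω : Type*} {mΩ : MeasurableSpace Ω} {P : Measure Ω}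

lemma const_mul_gaussianReal_inv {Y : Ω → ℝ} {x α : ℝ} (hα : 0 ≤ α)
    (hY : HasLaw Y (gaussianReal x α⁻¹.toNNReal) P) :
    HasLaw (fun ω ↦ α * Y ω) (gaussianReal (α * x) α.toNNReal) P := by
  convert gaussianReal_const_mul hY α using 2
  ext
  simp only [NNReal.coe_mul, NNReal.coe_mk, Real.coe_toNNReal _ hα,
    Real.coe_toNNReal _ (inv_nonneg.mpr hα), sq, mul_self_mul_inv]

lemma weightedMean_gaussianReal {Y₁ Y₂ : Ω → ℝ} {x α₁ α₂ : ℝ}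
    (hY₁ : HasLaw Y₁ (gaussianReal x α₁⁻¹.toNNReal) P)
    (hY₂ : HasLaw Y₂ (gaussianReal x α₂⁻¹.toNNReal) P) (hindep : IndepFun Y₁ Y₂ P)
    (h₁ : 0 ≤ α₁) (h₂ : 0 ≤ α₂) (h₁₂ : 0 < α₁ + α₂) :
    HasLaw (fun ω ↦ (α₁ * Y₁ ω + α₂ * Y₂ ω) / (α₁ + α₂))
      (gaussianReal x (α₁ + α₂)⁻¹.toNNReal) P := by
  have hX₁ := hY₁.const_mul_gaussianReal_inv h₁
  have hX₂ := hY₂.const_mul_gaussianReal_inv h₂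
  have hsum : HasLaw (fun ω ↦ α₁ * Y₁ ω + α₂ * Y₂ ω)
      (gaussianReal (α₁ * x + α₂ * x) (α₁.toNNReal + α₂.toNNReal)) P :=
    ⟨by fun_prop, gaussianReal_add_gaussianReal_of_indepFun
      (hindep.comp (measurable_const_mul α₁) (measurable_const_mul α₂)) hX₁.map_eq hX₂.map_eq⟩
  convert gaussianReal_div_const hsum (α₁ + α₂) using 2
  · field_simp
  · ext
    simp only [NNReal.coe_div, NNReal.coe_add, NNReal.coe_mk, Real.coe_toNNReal _ h₁,
      Real.coe_toNNReal _ h₂, Real.coe_toNNReal _ (inv_nonneg.mpr h₁₂.le)]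
    field_simp

lemma bayesUpdate_fst_gaussianReal {Y : Ω → ℝ} (θ : ℝ × ℝ) {x α : ℝ} (hα : 0 ≤ α)
    (hY : HasLaw Y (gaussianReal x α⁻¹.toNNReal) P) :
    HasLaw (fun ω ↦ (bayesUpdate θ (Y ω) α).1)
      (gaussianReal ((θ.1 * θ.2 + x * α) / (θ.2 + α)) (α / (θ.2 + α) ^ 2).toNNReal) P := by
  have haffine := gaussianReal_div_const
    (gaussianReal_const_add (hY.const_mul_gaussianReal_inv hα) (θ.1 * θ.2)) (θ.2 + α)
  convert haffine using 2
  · simp only [bayesUpdate]; ring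
  · ring
  · ext; simp [hα, div_nonneg hα (sq_nonneg _)]

end ProbabilityTheory.HasLaw

theorem bayes_flow_additive_accuracy_general
    {Ω : Type*} [MeasurableSpace Ω] (P : Measure Ω)
    (μ₀ ρ₀ x α₁ α₂ : ℝ) (hρ : 0 < ρ₀) (h₁ : 0 < α₁) (h₂ : 0 < α₂)
    (Y₁ Y₂ : Ω → ℝ) (hm₁ : Measurable Y₁) (hm₂ : Measurable Y₂)
    (hY₁ : P.map Y₁ = gaussianReal x (α₁⁻¹).toNNReal)
    (hY₂ : P.map Y₂ = gaussianReal x (α₂⁻¹).toNNReal)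
    (hindep : IndepFun Y₁ Y₂ P) :
    P.map (fun ω =>
        (bayesUpdate (bayesUpdate (μ₀, ρ₀) (Y₁ ω) α₁) (Y₂ ω) α₂).1) =
      gaussianReal ((μ₀ * ρ₀ + x * (α₁ + α₂)) / (ρ₀ + α₁ + α₂))
        (((α₁ + α₂) / (ρ₀ + α₁ + α₂) ^ 2)).toNNReal := by
  have hpooled := HasLaw.weightedMean_gaussianReal ⟨hm₁.aemeasurable, hY₁⟩
    ⟨hm₂.aemeasurable, hY₂⟩ hindep h₁.le h₂.le (by positivity)
  have hsingle := (hpooled.bayesUpdate_fst_gaussianReal (μ₀, ρ₀) (by positivity)).map_eq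
  simp_rw [bayesUpdate_bayesUpdate (μ₀, ρ₀) _ _ α₁ α₂ (by dsimp; positivity) (by positivity)]
  simpa only [add_assoc] using hsingle

/-- Additive property of accuracies: after two Bayesian updates with independent
Gaussian observations `Y₁ ~ N(x, α₁⁻¹)`, `Y₂ ~ N(x, α₂⁻¹)`, the posterior mean `μ₂`
is distributed as `N((μ₀ρ₀ + x(α₁+α₂))/(ρ₀+α₁+α₂), (α₁+α₂)/(ρ₀+α₁+α₂)²)`,
the distribution obtained from a single update with accuracy `α₁ + α₂`. -/
theorem bayes_flow_additive_accuracy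
    {Ω : Type*} [MeasurableSpace Ω] (P : Measure Ω) [IsProbabilityMeasure P]
    (μ₀ ρ₀ x α₁ α₂ : ℝ) (hρ : 0 < ρ₀) (h₁ : 0 < α₁) (h₂ : 0 < α₂)
    (Y₁ Y₂ : Ω → ℝ) (hm₁ : Measurable Y₁) (hm₂ : Measurable Y₂)
    (hY₁ : P.map Y₁ = gaussianReal x (α₁⁻¹).toNNReal)
    (hY₂ : P.map Y₂ = gaussianReal x (α₂⁻¹).toNNReal)
    (hindep : IndepFun Y₁ Y₂ P) :
    P.map (fun ω =>
        (bayesUpdate (bayesUpdate (μ₀, ρ₀) (Y₁ ω) α₁) (Y₂ ω) α₂).1) =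
      gaussianReal ((μ₀ * ρ₀ + x * (α₁ + α₂)) / (ρ₀ + α₁ + α₂))
        (((α₁ + α₂) / (ρ₀ + α₁ + α₂) ^ 2)).toNNReal :=
  bayes_flow_additive_accuracy_general P μ₀ ρ₀ x α₁ α₂ hρ h₁ h₂ Y₁ Y₂ hm₁ hm₂ hY₁ hY₂ hindep
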